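/- The rescaling maps in the self-replication of overtwisted discs are Engel embeddings (from the proof of Lemma 4.2, 'lem:selfReplication'): Fix L > 0 and r ∈ [0,1). Define F_r : ℝ⁴ → ℝ⁴ by F_r(y,x,z,w) = (y·(1−r)³ + L·r/2, x·(1−r)², z·(1−r), w·(1−r)). Then: (a) F_r is injective; (b) F_r maps [0,L] × D³ into [0,L] × D³, where D³ is the closed unit ball in the (x,z,w)-coordinates; more precisely the y-coordinate of the image lies in [Lr/2, Lr/2 + L(1−r)³] and Lr/2 + L(1−r)³ ≤ L(1 − r/2) ≤ L; (c) for every point p, the derivative DF_r (which is the constant linear map with diagonal entries ((1−r)³, (1−r)², (1−r), (1−r))) satisfies DF_r(W(p)) = (1−r)·W(F_r(p)) and DF_r(X(p)) = (1−r)·X(F_r(p)); in particular DF_r maps the plane D_trans(p) onto the plane D_trans(F_r(p)), so F_r is an Engel embedding of ([0,L] × D³, D_trans) into itself. -/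
import Mathlib


open Set

/-- The vector field `W = ∂_w` on ℝ⁴ with coordinates `(y,x,z,w)`. -/
def Wfield : (Fin 4 → ℝ) → (Fin 4 → ℝ) := fun _ => ![0, 0, 0, 1]

/-- The vector field `X = ∂_z + w∂_x + wz∂_y`, i.e. `(wz, w, 1, 0)`. -/
def Xfield : (Fin 4 → ℝ) → (Fin 4 → ℝ) := fun p => ![p 3 * p 2, p 3, 1, 0]

/-- The rescaling map `F_r(y,x,z,w) = (y(1−r)³ + Lr/2, x(1−r)², z(1−r), w(1−r))`. -/
noncomputable def Fmap (L r : ℝ) : (Fin 4 → ℝ) → (Fin 4 → ℝ) :=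
  fun p => ![p 0 * (1 - r) ^ 3 + L * r / 2, p 1 * (1 - r) ^ 2,
    p 2 * (1 - r), p 3 * (1 - r)]

/-- The domain `[0,L] × D³`, where `D³` is the closed unit ball in the
`(x,z,w)`-coordinates. -/
def Box (L : ℝ) : Set (Fin 4 → ℝ) :=
  {p | p 0 ∈ Icc 0 L ∧ (p 1) ^ 2 + (p 2) ^ 2 + (p 3) ^ 2 ≤ 1}

/-- The derivative of `Fmap L r`: the diagonal linear map with entries
`((1−r)³, (1−r)², (1−r), (1−r))`. -/
noncomputable def Amap (r : ℝ) : (Fin 4 → ℝ) →L[ℝ] (Fin 4 → ℝ) :=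
  ContinuousLinearMap.pi
    ![(1 - r) ^ 3 • ContinuousLinearMap.proj 0,
      (1 - r) ^ 2 • ContinuousLinearMap.proj 1,
      (1 - r) • ContinuousLinearMap.proj 2,
      (1 - r) • ContinuousLinearMap.proj 3]

lemma Fmap_eq (L r : ℝ) :
    Fmap L r = fun p => Amap r p + ![L * r / 2, 0, 0, 0] := by
  funext p
  funext i
  fin_cases i <;>
    simp [Fmap, Amap, ContinuousLinearMap.proj_apply] <;> ring

lemma fderiv_Fmap (L r : ℝ) (p : Fin 4 → ℝ) :
    fderiv ℝ (Fmap L r) p = Amap r := by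
  rw [Fmap_eq]
  exact (((Amap r).hasFDerivAt).add_const _).fderiv

/-- From the proof of Lemma 4.2 (`lem:selfReplication`): for `L > 0` and `r ∈ [0,1)`,
the map `F_r` is (a) injective; (b) maps `[0,L] × D³` into itself, with the
`y`-coordinate of the image lying in `[Lr/2, Lr/2 + L(1−r)³]` and
`Lr/2 + L(1−r)³ ≤ L(1−r/2) ≤ L`; and (c) its derivative carries `W` and `X` to
`(1−r)·W` and `(1−r)·X` respectively, hence maps the Engel plane `D_trans(p) = ⟨W,X⟩(p)`
onto `D_trans(F_r p)`: `F_r` is an Engel embedding of `([0,L] × D³, D_trans)` into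
itself. -/
theorem selfReplication_Fr (L r : ℝ) (hL : 0 < L) (hr : r ∈ Ico (0:ℝ) 1) :
    Function.Injective (Fmap L r) ∧
    (∀ p ∈ Box L, Fmap L r p ∈ Box L ∧
      (Fmap L r p) 0 ∈ Icc (L * r / 2) (L * r / 2 + L * (1 - r) ^ 3)) ∧
    (L * r / 2 + L * (1 - r) ^ 3 ≤ L * (1 - r / 2) ∧ L * (1 - r / 2) ≤ L) ∧
    (∀ p : Fin 4 → ℝ,
      fderiv ℝ (Fmap L r) p (Wfield p) = (1 - r) • Wfield (Fmap L r p) ∧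
      fderiv ℝ (Fmap L r) p (Xfield p) = (1 - r) • Xfield (Fmap L r p)) ∧
    (∀ p : Fin 4 → ℝ,
      Submodule.map (fderiv ℝ (Fmap L r) p).toLinearMap
          (Submodule.span ℝ ({Wfield p, Xfield p} : Set (Fin 4 → ℝ))) =
        Submodule.span ℝ
          ({Wfield (Fmap L r p), Xfield (Fmap L r p)} : Set (Fin 4 → ℝ))) := by
  obtain ⟨hr0, hr1⟩ := hr
  have h1r : (0:ℝ) < 1 - r := by linarith
  have hne : (1 - r : ℝ) ≠ 0 := ne_of_gt h1r
  have hW : ∀ p : Fin 4 → ℝ,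
      fderiv ℝ (Fmap L r) p (Wfield p) = (1 - r) • Wfield (Fmap L r p) := by
    intro p
    rw [fderiv_Fmap]
    funext i
    fin_cases i <;>
      simp [Amap, Wfield, ContinuousLinearMap.proj_apply]
  have hX : ∀ p : Fin 4 → ℝ,
      fderiv ℝ (Fmap L r) p (Xfield p) = (1 - r) • Xfield (Fmap L r p) := by
    intro p
    rw [fderiv_Fmap]
    funext i
    fin_cases i <;>
      simp [Amap, Xfield, Fmap, ContinuousLinearMap.proj_apply] <;> ring
  refine ⟨?_, ?_, ⟨?_, ?_⟩, fun p => ⟨hW p, hX p⟩, ?_⟩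
  · -- injectivity
    intro p q h
    have h0 := congrFun h 0
    have h1 := congrFun h 1
    have h2 := congrFun h 2
    have h3 := congrFun h 3
    simp [Fmap] at h0 h1 h2 h3
    have e3 : (1 - r : ℝ) ^ 3 ≠ 0 := pow_ne_zero _ hne
    have e2 : (1 - r : ℝ) ^ 2 ≠ 0 := pow_ne_zero _ hne
    funext i
    fin_cases i
    · exact h0.resolve_right hne
    · exact h1.resolve_right hne
    · exact h2.resolve_right hne
    · exact h3.resolve_right hne
  · -- box mapping
    intro p hp
    obtain ⟨⟨hp0, hpL⟩, hball⟩ := hp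
    have h1r1 : (1 - r : ℝ) ≤ 1 := by linarith
    have key : (p 1 * (1-r)^2)^2 + (p 2 * (1-r))^2 + (p 3 * (1-r))^2 ≤ 1 := by
      nlinarith [sq_nonneg (p 1), sq_nonneg (p 2), sq_nonneg (p 3), sq_nonneg (1-r),
        pow_le_one₀ (le_of_lt h1r) h1r1 (n := 2), pow_le_one₀ (le_of_lt h1r) h1r1 (n := 4),
        mul_nonneg (sq_nonneg (p 1)) (sq_nonneg ((1-r)^2)),
        sq_nonneg (p 1 * (1-r)^2), sq_nonneg (p 2 * (1-r)), sq_nonneg (p 3 * (1-r))]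
    have hy0 : 0 ≤ p 0 * (1 - r) ^ 3 :=
      mul_nonneg hp0 (by positivity)
    have hyL : p 0 * (1 - r) ^ 3 ≤ L * (1 - r) ^ 3 :=
      mul_le_mul_of_nonneg_right hpL (by positivity)
    refine ⟨⟨⟨?_, ?_⟩, ?_⟩, ?_, ?_⟩
    · show (0:ℝ) ≤ p 0 * (1 - r) ^ 3 + L * r / 2
      nlinarith
    · show p 0 * (1 - r) ^ 3 + L * r / 2 ≤ L
      have hc : (1 - r : ℝ) ^ 3 ≤ 1 - r := by
        nlinarith [mul_le_mul_of_nonneg_left (pow_le_one₀ h1r.le h1r1 (n := 2)) h1r.le]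
      have := mul_le_mul_of_nonneg_left hc hL.le
      nlinarith
    · show (p 1 * (1-r)^2)^2 + (p 2 * (1-r))^2 + (p 3 * (1-r))^2 ≤ 1
      exact key
    · show L * r / 2 ≤ p 0 * (1 - r) ^ 3 + L * r / 2
      linarith
    · show p 0 * (1 - r) ^ 3 + L * r / 2 ≤ L * r / 2 + L * (1 - r) ^ 3
      linarith
  · have hc : (1 - r : ℝ) ^ 3 ≤ 1 - r := by
      nlinarith [mul_le_mul_of_nonneg_left
        (pow_le_one₀ h1r.le (by linarith : (1-r:ℝ) ≤ 1) (n := 2)) h1r.le]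
    have := mul_le_mul_of_nonneg_left hc hL.le
    nlinarith
  · nlinarith
  · -- span
    intro p
    rw [Submodule.map_span]
    have himg : (fderiv ℝ (Fmap L r) p).toLinearMap '' {Wfield p, Xfield p} =
        {(1 - r) • Wfield (Fmap L r p), (1 - r) • Xfield (Fmap L r p)} := by
      rw [Set.image_pair]
      simp only [ContinuousLinearMap.coe_coe]
      rw [hW p, hX p]
    rw [himg]
    apply le_antisymm
    · rw [Submodule.span_le]
      rintro v (rfl | rfl)
      · exact Submodule.smul_mem _ _ (Submodule.subset_span (Or.inl rfl))
      · exact Submodule.smul_mem _ _ (Submodule.subset_span (Or.inr rfl))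
    · rw [Submodule.span_le]
      rintro v (rfl | rfl)
      · have hm := Submodule.smul_mem
          (Submodule.span ℝ ({(1 - r) • Wfield (Fmap L r p),
            (1 - r) • Xfield (Fmap L r p)} : Set (Fin 4 → ℝ))) ((1 - r)⁻¹)
          (Submodule.subset_span (Or.inl rfl))
        rwa [smul_smul, inv_mul_cancel₀ hne, one_smul] at hm
      · have hm := Submodule.smul_mem
          (Submodule.span ℝ ({(1 - r) • Wfield (Fmap L r p),
            (1 - r) • Xfield (Fmap L r p)} : Set (Fin 4 → ℝ))) ((1 - r)⁻¹)
          (Submodule.subset_span (Or.inr rfl))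
        rwa [smul_smul, inv_mul_cancel₀ hne, one_smul] at hm
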